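/- Assume the invariant setting with S_A ≠ ∅, and write p_A = max S_A. Assume a_A ∈ L_A \ S_A, p_A < a_B, and every element of S_B is less than a_B (case 5 of the case analysis). Then: S'_A = S_A \ {p_A}; S'_B = S_B; p_A is the A-side peek, i.e. p_A = min((L_A \ {a_A}) \ S'_A), and p_A is less than every element of (L_B ∪ {a_B}) \ S'_B; and H_h(L') = H_h(L_A ∪ L_B) = S'_A ∪ {p_A} ∪ S_B. -/

import Mathlib

/-!
`S_A ∪ S_B` is an initial segment of `L_A ∪ L_B`, so `S_A` is one of `L_A`, `S_B` one of `L_B`,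
and each stays an initial segment when an element above it is removed from or added to the
ambient set. Dropping `p_A = max S_A` from `S_A` leaves an initial segment of `L_A \ {a_A}`
whose complement starts at `p_A`; and since `a_B` lies above all of `S_A ∪ S_B`, that set is
still the initial segment of size `h` of `L'`.
-/

open Finset

/-- `smallSet m L` is `H_m(L)`: the set of the `m` smallest elements of the finset `L`
(the first `m` entries of the increasing enumeration of `L`). -/
def smallSet {α : Type*} [LinearOrder α] (m : ℕ) (L : Finset α) : Finset α :=
  ((L.sort (· ≤ ·)).take m).toFinset

section

variable {α : Type*} [LinearOrder α]

def IsInitialSegment (S L : Finset α) : Prop :=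
  S ⊆ L ∧ ∀ x ∈ S, ∀ y ∈ L \ S, x < y

lemma smallSet_card {m : ℕ} {L : Finset α} (hm : m ≤ #L) : #(smallSet m L) = m := by
  have hnd : ((L.sort (· ≤ ·)).take m).Nodup :=
    (L.sort_nodup (· ≤ ·)).sublist (List.take_sublist m _)
  simp [smallSet, List.toFinset_card_of_nodup hnd, hm]

lemma isInitialSegment_smallSet (m : ℕ) (L : Finset α) :
    IsInitialSegment (smallSet m L) L := by
  set l := L.sort (· ≤ ·)
  have hsplit : (l.take m ++ l.drop m).Pairwise (· < ·) := by
    rw [List.take_append_drop]; exact L.sortedLT_sort.pairwise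
  refine ⟨fun x hx => ?_, fun x hx y hy => ?_⟩
  · simp only [smallSet, List.mem_toFinset] at hx
    exact (mem_sort _).mp (List.take_subset m l hx)
  · simp only [smallSet, List.mem_toFinset, mem_sdiff] at hx hy
    have hyl : y ∈ l.take m ++ l.drop m := by
      rw [List.take_append_drop]; exact (mem_sort _).mpr hy.1
    have hyd : y ∈ l.drop m := (List.mem_append.mp hyl).resolve_left hy.2
    exact (List.pairwise_append.mp hsplit).2.2 x hx y hyd

namespace IsInitialSegment

variable {S T L M : Finset α}

lemma smallSet_eq (hS : IsInitialSegment S L) : smallSet #S L = S := by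
  have hcard : #(smallSet #S L) = #S := smallSet_card (card_le_card hS.1)
  have hsub : smallSet #S L ⊆ S := by
    intro x hx
    by_contra hxS
    obtain ⟨y, hyS, hy⟩ : ∃ y ∈ S, y ∉ smallSet #S L := by
      by_contra! hall
      exact hxS ((eq_of_subset_of_card_le hall hcard.le) ▸ hx)
    have hseg := isInitialSegment_smallSet #S L
    exact (hS.2 y hyS x (mem_sdiff.mpr ⟨hseg.1 hx, hxS⟩)).asymm
      (hseg.2 x hx y (mem_sdiff.mpr ⟨hS.1 hyS, hy⟩))
  exact eq_of_subset_of_card_le hsub hcard.ge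

lemma mono (hS : IsInitialSegment S L) (hSM : S ⊆ M) (hML : M ⊆ L) :
    IsInitialSegment S M :=
  ⟨hSM, fun x hx y hy => hS.2 x hx y (sdiff_subset_sdiff hML subset_rfl hy)⟩

lemma union_right (hS : IsInitialSegment S L) (hM : ∀ x ∈ S, ∀ y ∈ M, x < y) :
    IsInitialSegment S (L ∪ M) := by
  refine ⟨hS.1.trans subset_union_left, fun x hx y hy => ?_⟩
  obtain ⟨hyLM, hyS⟩ := mem_sdiff.mp hy
  rcases mem_union.mp hyLM with hyL | hyM
  · exact hS.2 x hx y (mem_sdiff.mpr ⟨hyL, hyS⟩)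
  · exact hM x hx y hyM

lemma left_of_union (h : IsInitialSegment (S ∪ T) (L ∪ M)) (hSL : S ⊆ L)
    (hTL : Disjoint T L) : IsInitialSegment S L := by
  refine ⟨hSL, fun x hx y hy => h.2 x (mem_union_left _ hx) y ?_⟩
  obtain ⟨hyL, hyS⟩ := mem_sdiff.mp hy
  have hyT : y ∉ T := fun hyT => disjoint_left.mp hTL hyT hyL
  simp [hyL, hyS, hyT]

lemma erase_max' (hS : IsInitialSegment S L) (hne : S.Nonempty) :
    IsInitialSegment (S.erase (S.max' hne)) L := by
  refine ⟨(erase_subset _ _).trans hS.1, fun x hx y hy => ?_⟩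
  obtain ⟨hxp, hxS⟩ := mem_erase.mp hx
  obtain ⟨hyL, hy⟩ := mem_sdiff.mp hy
  by_cases hyS : y ∈ S
  · have hyp : y = S.max' hne := by_contra fun hyp => hy (mem_erase.mpr ⟨hyp, hyS⟩)
    exact hyp ▸ lt_of_le_of_ne (S.le_max' x hxS) hxp
  · exact hS.2 x hxS y (mem_sdiff.mpr ⟨hyL, hyS⟩)

lemma min_sdiff_erase_max' (hS : IsInitialSegment S L) (hne : S.Nonempty) :
    (L \ S.erase (S.max' hne)).min = (S.max' hne : WithTop α) := by
  have hp : S.max' hne ∈ L \ S.erase (S.max' hne) := by simp [hS.1 (S.max'_mem hne)]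
  refine le_antisymm (min_le hp) (Finset.le_min fun y hy => WithTop.coe_le_coe.mpr ?_)
  obtain ⟨hyL, hy⟩ := mem_sdiff.mp hy
  by_cases hyS : y ∈ S
  · exact le_of_eq (by_contra fun hyp => hy (mem_erase.mpr ⟨Ne.symm hyp, hyS⟩))
  · exact (hS.2 _ (S.max'_mem hne) y (mem_sdiff.mpr ⟨hyL, hyS⟩)).le

end IsInitialSegment

end

theorem invariant_case5_general {α : Type*} [LinearOrder α] (h : ℕ)
    (LA LB SA SB : Finset α) (hdisj : Disjoint LA LB)
    (hcard : LA.card + LB.card = 2 * h + 1)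
    (hSA : SA ⊆ LA) (hSB : SB ⊆ LB)
    (hinv : SA ∪ SB = smallSet h (LA ∪ LB))
    (aA aB : α)
    (hSAne : SA.Nonempty)
    (h1 : aA ∈ LA \ SA)
    (h2 : SA.max' hSAne < aB)
    (h3 : ∀ x ∈ SB, x < aB) :
    smallSet (SA.card - 1) (LA \ {aA}) = SA \ {SA.max' hSAne} ∧
    smallSet SB.card (LB ∪ {aB}) = SB ∧
    ((LA \ {aA}) \ smallSet (SA.card - 1) (LA \ {aA})).min =
      (SA.max' hSAne : WithTop α) ∧
    (∀ x ∈ (LB ∪ {aB}) \ smallSet SB.card (LB ∪ {aB}), SA.max' hSAne < x) ∧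
    smallSet h ((LA \ {aA}) ∪ LB ∪ {aB}) = smallSet h (LA ∪ LB) ∧
    smallSet h ((LA \ {aA}) ∪ LB ∪ {aB}) =
      smallSet (SA.card - 1) (LA \ {aA}) ∪ {SA.max' hSAne} ∪ SB := by
  set p := SA.max' hSAne
  have hp : p ∈ SA := SA.max'_mem hSAne
  have hseg : IsInitialSegment (SA ∪ SB) (LA ∪ LB) := hinv ▸ isInitialSegment_smallSet h _
  have hcardS : #(SA ∪ SB) = h :=
    hinv ▸ smallSet_card (by rw [card_union_of_disjoint hdisj]; omega)
  have hsegA : IsInitialSegment SA (LA \ {aA}) :=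
    (hseg.left_of_union hSA (hdisj.symm.mono_left hSB)).mono
      (subset_sdiff.mpr ⟨hSA, disjoint_singleton_right.mpr (mem_sdiff.mp h1).2⟩) sdiff_subset
  have hsegB : IsInitialSegment SB LB := by
    rw [union_comm SA, union_comm LA] at hseg
    exact hseg.left_of_union hSB (hdisj.mono_left hSA)
  have hlt_aB : ∀ x ∈ SA ∪ SB, x < aB := by
    simp only [mem_union]
    rintro x (hx | hx)
    exacts [(SA.le_max' x hx).trans_lt h2, h3 x hx]
  have hSA' : smallSet (#SA - 1) (LA \ {aA}) = SA \ {p} := by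
    rw [sdiff_singleton_eq_erase p, ← card_erase_of_mem hp]
    exact (hsegA.erase_max' hSAne).smallSet_eq
  have hSB' : smallSet #SB (LB ∪ {aB}) = SB :=
    (hsegB.union_right (by simpa using h3)).smallSet_eq
  have hL' : smallSet h (LA \ {aA} ∪ LB ∪ {aB}) = SA ∪ SB := by
    rw [← hcardS]
    refine ((hseg.mono ?_ ?_).union_right (by simpa using hlt_aB)).smallSet_eq
    · exact union_subset_union hsegA.1 hSB
    · exact union_subset_union sdiff_subset subset_rfl
  refine ⟨hSA', hSB', ?_, ?_, by rw [hL', hinv], ?_⟩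
  · rw [hSA', sdiff_singleton_eq_erase p]
    exact hsegA.min_sdiff_erase_max' hSAne
  · rw [hSB']
    intro x hx
    obtain ⟨hxB | hxaB, hxSB⟩ := (mem_sdiff.mp hx).imp_left mem_union.mp
    · have hxSA : x ∉ SA := fun hxSA => disjoint_left.mp hdisj (hSA hxSA) hxB
      exact hseg.2 p (mem_union_left _ hp) x (by simp [hxB, hxSA, hxSB])
    · exact mem_singleton.mp hxaB ▸ h2
  · rw [hL', hSA', sdiff_union_of_subset (singleton_subset_iff.mpr hp)]

/-- case 5 of the case analysis.  Invariant setting: `L_A, L_B` disjoint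
with `|L_A| + |L_B| = 2h+1`, `S_A ⊆ L_A`, `S_B ⊆ L_B`, `S_A ∪ S_B = H_h(L_A ∪ L_B)`,
`a_A ∈ L_A`, `a_B ∉ L_A ∪ L_B`; `L' = (L_A \ {a_A}) ∪ L_B ∪ {a_B}`; updated small sets
`S'_A = H_{|S_A|-1}(L_A \ {a_A})` and `S'_B = H_{|S_B|}(L_B ∪ {a_B})`.
Assume `S_A ≠ ∅`, `a_A ∈ L_A \ S_A`, `p_A = max S_A < a_B`, and every element of `S_B`
is less than `a_B`.  Then `S'_A = S_A \ {p_A}`, `S'_B = S_B`, `p_A` is the A-side peek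
(`p_A = min((L_A \ {a_A}) \ S'_A)`) and is less than every element of
`(L_B ∪ {a_B}) \ S'_B`, and `H_h(L') = H_h(L_A ∪ L_B) = S'_A ∪ {p_A} ∪ S_B`. -/
theorem invariant_case5 {α : Type*} [LinearOrder α] (h : ℕ)
    (LA LB SA SB : Finset α) (hdisj : Disjoint LA LB)
    (hcard : LA.card + LB.card = 2 * h + 1)
    (hSA : SA ⊆ LA) (hSB : SB ⊆ LB)
    (hinv : SA ∪ SB = smallSet h (LA ∪ LB))
    (aA aB : α) (haA : aA ∈ LA) (haB : aB ∉ LA ∪ LB)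
    (hSAne : SA.Nonempty)
    (h1 : aA ∈ LA \ SA)
    (h2 : SA.max' hSAne < aB)
    (h3 : ∀ x ∈ SB, x < aB) :
    smallSet (SA.card - 1) (LA \ {aA}) = SA \ {SA.max' hSAne} ∧
    smallSet SB.card (LB ∪ {aB}) = SB ∧
    ((LA \ {aA}) \ smallSet (SA.card - 1) (LA \ {aA})).min =
      (SA.max' hSAne : WithTop α) ∧
    (∀ x ∈ (LB ∪ {aB}) \ smallSet SB.card (LB ∪ {aB}), SA.max' hSAne < x) ∧
    smallSet h ((LA \ {aA}) ∪ LB ∪ {aB}) = smallSet h (LA ∪ LB) ∧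
    smallSet h ((LA \ {aA}) ∪ LB ∪ {aB}) =
      smallSet (SA.card - 1) (LA \ {aA}) ∪ {SA.max' hSAne} ∪ SB :=
  invariant_case5_general h LA LB SA SB hdisj hcard hSA hSB hinv aA aB hSAne h1 h2 h3
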